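/- Full-matrix AdaGrad preconditioner trace bound: for vectors g_1, …, g_T ∈ ℝ^d, letting G_t = Σ_{s≤t} g_s g_sᵀ and H_t = G_t^{1/2}, one has Σ_{t=1}^T g_tᵀ H_t† g_t ≤ 2 tr(H_T), where H_t† is the Moore–Penrose pseudoinverse and each g_t lies in the range of G_t. -/

import Mathlib

/-! Write `H = √A`, `S = √B` and `X = H†` for PSD matrices `B ≤ A`. Then `H X` is the orthogonal
projection onto the range of `A`, which contains the range of `S`, so `tr S = tr (H X S)`.
Cauchy–Schwarz for the semi-inner product `⟪M, N⟫ = tr (N X Mᵀ)` gives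
`(tr S)² ≤ tr (X B) · tr H`, hence `2 tr S ≤ tr (X B) + tr H` by AM–GM, that is
`tr (X (A - B)) = tr H - tr (X B) ≤ 2 (tr H - tr S)`. For `A = G_t` and `B = G_{t-1}` the left
side is `g_tᵀ H_t† g_t`, and the right sides telescope to at most `2 tr H_T`. -/

open Matrix

/-- The square root of a positive semidefinite matrix, as defined in Mathlib (December 2024);
it was removed from Mathlib in favour of `CFC.sqrt`. -/
noncomputable def Matrix.PosSemidef.sqrt {n : Type*} [Fintype n] [DecidableEq n] {𝕜 : Type*}
    [RCLike 𝕜] [PartialOrder 𝕜] {A : Matrix n n 𝕜} (hA : A.PosSemidef) : Matrix n n 𝕜 :=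
  hA.1.eigenvectorUnitary.1 * diagonal ((↑) ∘ (√·) ∘ hA.1.eigenvalues) *
    (star hA.1.eigenvectorUnitary : Matrix n n 𝕜)

open scoped MatrixOrder

namespace Matrix

structure IsMoorePenroseInverse {m n R : Type*} [Fintype m] [Fintype n] [CommSemiring R]
    (H : Matrix m n R) (X : Matrix n m R) : Prop where
  mul_inv_mul : H * X * H = H
  inv_mul_inv : X * H * X = X
  transpose_mul_inv : (H * X)ᵀ = H * X
  transpose_inv_mul : (X * H)ᵀ = X * H

variable {n : Type*} [Fintype n]

namespace IsMoorePenroseInverse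

variable {R : Type*} [CommSemiring R] {H X : Matrix n n R}

theorem transpose_eq (hX : IsMoorePenroseInverse H X) (hH : Hᵀ = H) : Xᵀ = X := by
  have hXH : H * Xᵀ = X * H := by
    rw [← hX.transpose_inv_mul, transpose_mul, hH]
  have hHX : Xᵀ * H = H * X := by
    rw [← hX.transpose_mul_inv, transpose_mul, hH]
  have hXXH : X * X * H = X := calc
    X * X * H = X * (H * X) * X * H := by rw [← Matrix.mul_assoc X H X, hX.inv_mul_inv]
    _ = X * Xᵀ * (H * X * H) := by simp only [← hHX, Matrix.mul_assoc]
    _ = X := by rw [hX.mul_inv_mul, Matrix.mul_assoc, hHX, ← Matrix.mul_assoc,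
      hX.inv_mul_inv]
  calc Xᵀ = (X * X * H)ᵀ := by rw [hXXH]
    _ = H * Xᵀ * Xᵀ := by rw [transpose_mul, transpose_mul, hH, Matrix.mul_assoc]
    _ = X * H * Xᵀ := by rw [hXH]
    _ = X := by rw [Matrix.mul_assoc, hXH, ← Matrix.mul_assoc, hXXH]

end IsMoorePenroseInverse

variable {H X : Matrix n n ℝ}

theorem IsMoorePenroseInverse.posSemidef (hX : IsMoorePenroseInverse H X) (hH : H.PosSemidef) :
    X.PosSemidef := by
  have hXt : Xᴴ = X := hX.transpose_eq hH.1.eq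
  simpa only [hXt, hX.inv_mul_inv] using hH.conjTranspose_mul_mul_same X

theorem PosSemidef.trace_mul_mul_transpose_sq_le {M : Matrix n n ℝ} (hM : M.PosSemidef)
    (x y : Matrix n n ℝ) :
    (y * M * xᵀ).trace ^ 2 ≤ (x * M * xᵀ).trace * (y * M * yᵀ).trace := by
  let _ := M.toMatrixSeminormedAddCommGroup hM
  let _ := M.toMatrixInnerProductSpace hM
  rw [sq]
  exact real_inner_mul_inner_self_le x y

variable [DecidableEq n]

theorem mul_eq_self_of_transpose_mul_self_le {A P S : Matrix n n ℝ} (hPA : Pᵀ * A = A)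
    (hSA : Sᵀ * S ≤ A) : S * P = S := by
  set Q := 1 - P
  have hQA : Qᵀ * A * Q = 0 := by
    rw [transpose_sub, transpose_one, Matrix.sub_mul, hPA, Matrix.one_mul, sub_self,
      Matrix.zero_mul]
  have hsum : (S * Q)ᵀ * (S * Q) + Qᵀ * (A - Sᵀ * S) * Q = Qᵀ * A * Q := by
    rw [transpose_mul]
    noncomm_ring
  have hSQ : ((S * Q)ᵀ * (S * Q)).trace = 0 := by
    have h₁ : 0 ≤ ((S * Q)ᵀ * (S * Q)).trace :=
      (posSemidef_conjTranspose_mul_self (S * Q)).trace_nonneg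
    have h₂ : 0 ≤ (Qᵀ * (A - Sᵀ * S) * Q).trace :=
      ((le_iff.mp hSA).conjTranspose_mul_mul_same Q).trace_nonneg
    have h₃ := congrArg trace hsum
    rw [trace_add, hQA, trace_zero] at h₃
    exact le_antisymm (by linarith) h₁
  have hSQ_zero : S * Q = 0 := trace_conjTranspose_mul_self_eq_zero_iff.mp hSQ
  rwa [Matrix.mul_sub, Matrix.mul_one, sub_eq_zero, eq_comm] at hSQ_zero

theorem PosSemidef.sqrt_eq_cfc_sqrt {A : Matrix n n ℝ} (hA : A.PosSemidef) :
    hA.sqrt = CFC.sqrt A := by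
  rw [CFC.sqrt_eq_real_sqrt A hA.nonneg, cfcₙ_eq_cfc, hA.1.cfc_eq, IsHermitian.cfc,
    Unitary.conjStarAlgAut_apply]
  rfl

theorem PosSemidef.posSemidef_sqrt {A : Matrix n n ℝ} (hA : A.PosSemidef) :
    hA.sqrt.PosSemidef := by
  rw [hA.sqrt_eq_cfc_sqrt]
  exact (CFC.sqrt_nonneg A).posSemidef

theorem PosSemidef.sqrt_mul_self {A : Matrix n n ℝ} (hA : A.PosSemidef) :
    hA.sqrt * hA.sqrt = A := by
  rw [hA.sqrt_eq_cfc_sqrt, CFC.sqrt_mul_sqrt_self A hA.nonneg]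

theorem IsMoorePenroseInverse.trace_mul_sub_le_two_mul_trace_sqrt_sub {A B : Matrix n n ℝ}
    (hA : A.PosSemidef) (hB : B.PosSemidef) (hBA : B ≤ A)
    (hX : IsMoorePenroseInverse hA.sqrt X) :
    (X * (A - B)).trace ≤ 2 * (hA.sqrt.trace - hB.sqrt.trace) := by
  set H := hA.sqrt
  set S := hB.sqrt
  have hH : H.PosSemidef := hA.posSemidef_sqrt
  have hS : S.PosSemidef := hB.posSemidef_sqrt
  have hHt : Hᵀ = H := hH.1.eq
  have hSt : Sᵀ = S := hS.1.eq
  have hXA : (X * A).trace = H.trace := by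
    rw [← hA.sqrt_mul_self, ← Matrix.mul_assoc, trace_mul_comm, ← Matrix.mul_assoc,
      hX.mul_inv_mul]
  have hSP : S * (H * X) = S := by
    refine mul_eq_self_of_transpose_mul_self_le (A := A) ?_ ?_
    · rw [hX.transpose_mul_inv, ← hA.sqrt_mul_self, ← Matrix.mul_assoc,
        hX.mul_inv_mul]
    · rwa [hSt, hB.sqrt_mul_self]
  have hHXS : (H * X * S).trace = S.trace := by rw [trace_mul_cycle, Matrix.mul_assoc, hSP]
  have hSXS : (S * X * S).trace = (X * B).trace := by
    rw [trace_mul_cycle, hB.sqrt_mul_self, trace_mul_comm]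
  have hHXH : (H * X * H).trace = H.trace := by rw [hX.mul_inv_mul]
  have hCS : S.trace ^ 2 ≤ (X * B).trace * H.trace := by
    have h := (hX.posSemidef hH).trace_mul_mul_transpose_sq_le S H
    rwa [hSt, hHt, hHXS, hSXS, hHXH] at h
  have hXB : 0 ≤ (X * B).trace := by
    have h := ((hX.posSemidef hH).conjTranspose_mul_mul_same S).trace_nonneg
    rwa [hS.1.eq, hSXS] at h
  have hAMGM : 2 * S.trace ≤ (X * B).trace + H.trace := by
    nlinarith [hH.trace_nonneg, sq_nonneg ((X * B).trace - H.trace)]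
  rw [Matrix.mul_sub, trace_sub, hXA]
  linarith

end Matrix

theorem fullmatrix_adagrad_trace_bound {d T : ℕ} (g : ℕ → Fin d → ℝ)
    (G : ℕ → Matrix (Fin d) (Fin d) ℝ)
    (hG : ∀ t, G t = ∑ s ∈ Finset.Icc 1 t, Matrix.vecMulVec (g s) (g s))
    (hpsd : ∀ t, (G t).PosSemidef)
    (Hd : ℕ → Matrix (Fin d) (Fin d) ℝ)
    (hpen : ∀ t, (hpsd t).sqrt * Hd t * (hpsd t).sqrt = (hpsd t).sqrt ∧
        Hd t * (hpsd t).sqrt * Hd t = Hd t ∧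
        ((hpsd t).sqrt * Hd t)ᵀ = (hpsd t).sqrt * Hd t ∧
        (Hd t * (hpsd t).sqrt)ᵀ = Hd t * (hpsd t).sqrt) :
    ∑ t ∈ Finset.Icc 1 T, g t ⬝ᵥ (Hd t).mulVec (g t)
      ≤ 2 * ((hpsd T).sqrt).trace := by
  induction T with
  | zero => simpa using (hpsd 0).posSemidef_sqrt.trace_nonneg
  | succ T ih =>
    have hGsucc : G (T + 1) - G T = vecMulVec (g (T + 1)) (g (T + 1)) := by
      rw [hG, hG, Finset.sum_Icc_succ_top (by omega), add_sub_cancel_left]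
    have hle : G T ≤ G (T + 1) := by
      rw [le_iff, hGsucc]
      simpa using posSemidef_vecMulVec_self_star (g (T + 1))
    obtain ⟨h₁, h₂, h₃, h₄⟩ := hpen (T + 1)
    have hstep := IsMoorePenroseInverse.trace_mul_sub_le_two_mul_trace_sqrt_sub
      (hpsd (T + 1)) (hpsd T) hle ⟨h₁, h₂, h₃, h₄⟩
    rw [hGsucc, mul_vecMulVec, trace_vecMulVec, dotProduct_comm] at hstep
    rw [Finset.sum_Icc_succ_top (by omega)]
    linarith
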